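/- arXiv:2409.07008 — 4 statements merged into one kernel-verified Lean document; each statement's English description precedes it below -/
import Mathlib

section
/- Let p be a prime with p ≡ 7 (mod 8). Then p divides D_p^-(2,2), the determinant of the (p-3)×(p-3) integer matrix whose (i,j)-entry is (i² + 2ij + 2j²)^(p-2) for 2 ≤ i, j ≤ p-2. -/
namespace DpAux

variable {p : ℕ} [Fact p.Prime]

theorem q_ne_zero (h4 : p % 4 = 3) (x : ZMod p) : 2*x^2+2*x+1 ≠ 0 := by
  intro hx
  have hsq : IsSquare (-1 : ZMod p) := ⟨2*x+1, by linear_combination (-2 : ZMod p) * hx⟩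
  exact (ZMod.exists_sq_eq_neg_one_iff.mp hsq) h4

theorem two_ne_zero' (h4 : p % 4 = 3) : (2 : ZMod p) ≠ 0 := by
  intro h2
  have : ((2:ℕ) : ZMod p) = 0 := by push_cast; exact h2
  rw [ZMod.natCast_eq_zero_iff] at this
  have := Nat.le_of_dvd (by norm_num) this
  omega

theorem F_ne_zero (h4 : p % 4 = 3) {a x : ZMod p} (ha : a ≠ 0) :
    a^2+2*a*x+2*x^2 ≠ 0 := by
  intro hf
  apply q_ne_zero h4 (x * a⁻¹)
  have h1 : a * a⁻¹ = 1 := mul_inv_cancel₀ ha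
  linear_combination (a⁻¹)^2 * hf + (-(a*a⁻¹+1) - 2*(x*a⁻¹)) * h1

theorem pow_sub_two {x : ZMod p} (hx : x ≠ 0) : x^(p-2) = x⁻¹ := by
  have hp2 : 2 ≤ p := (Fact.out : p.Prime).two_le
  have h1 : x^(p-2) * x = 1 := by
    rw [← pow_succ]
    have e : p-2+1 = p-1 := by omega
    rw [e]
    exact ZMod.pow_card_sub_one_eq_one hx
  exact eq_inv_of_mul_eq_one_right ((mul_comm _ _).trans h1)

theorem hA (h4 : p % 4 = 3) :
    2 * (∑ x : ZMod p, x * (2*x^2+2*x+1)⁻¹) + (∑ x : ZMod p, (2*x^2+2*x+1)⁻¹) = 0 := by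
  have e : ∀ x : ZMod p, (Equiv.subLeft (-1 : ZMod p) x) *
      (2*(Equiv.subLeft (-1 : ZMod p) x)^2+2*(Equiv.subLeft (-1 : ZMod p) x)+1)⁻¹
      = -((2*x^2+2*x+1)⁻¹) - x * (2*x^2+2*x+1)⁻¹ := by
    intro x
    have hq : (2*(-1 - x)^2+2*(-1 - x)+1) = 2*x^2+2*x+1 := by ring
    simp only [Equiv.subLeft_apply, hq]
    ring
  have h : (∑ x : ZMod p, x * (2*x^2+2*x+1)⁻¹)
      = ∑ x : ZMod p, (-((2*x^2+2*x+1)⁻¹) - x * (2*x^2+2*x+1)⁻¹) := by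
    rw [← Equiv.sum_comp (Equiv.subLeft (-1 : ZMod p))
      (fun x : ZMod p => x * (2*x^2+2*x+1)⁻¹)]
    exact Finset.sum_congr rfl (fun x _ => e x)
  rw [Finset.sum_sub_distrib, Finset.sum_neg_distrib] at h
  linear_combination h

theorem hB (h4 : p % 4 = 3) :
    2 * (∑ x : ZMod p, x^2 * (2*x^2+2*x+1)⁻¹) + 2 * (∑ x : ZMod p, x * (2*x^2+2*x+1)⁻¹)
      + (∑ x : ZMod p, (2*x^2+2*x+1)⁻¹) = 0 := by
  have h : ∑ x : ZMod p, (2*x^2+2*x+1) * (2*x^2+2*x+1)⁻¹ = 0 := by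
    rw [Finset.sum_congr rfl (fun x _ => mul_inv_cancel₀ (q_ne_zero h4 x))]
    simp [Finset.card_univ, ZMod.natCast_self]
  rw [← h]
  rw [Finset.mul_sum, Finset.mul_sum, ← Finset.sum_add_distrib, ← Finset.sum_add_distrib]
  exact Finset.sum_congr rfl (fun x _ => by ring)

theorem hC (h4 : p % 4 = 3) :
    (∑ x : ZMod p, (2*x^2+2*x+1)⁻¹)
      = 2 * (∑ x : ZMod p, x^2 * (2*x^2+2*x+1)⁻¹) + 1 := by
  have h2 := two_ne_zero' h4
  have hinv : Function.Involutive (fun x : ZMod p => (2*x)⁻¹) := by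
    intro x
    by_cases hx : x = 0
    · simp [hx]
    · field_simp
  have h := Equiv.sum_comp hinv.toPerm (fun x : ZMod p => (2*x^2+2*x+1)⁻¹)
  have key : ∀ x : ZMod p,
      (2*((2*x)⁻¹)^2+2*((2*x)⁻¹)+1)⁻¹
        = 2*x^2*(2*x^2+2*x+1)⁻¹ + (if x = 0 then 1 else 0) := by
    intro x
    by_cases hx : x = 0
    · simp [hx]
    · rw [if_neg hx, add_zero]
      have hq := q_ne_zero h4 x
      have h2x : (2:ZMod p)*x ≠ 0 := mul_ne_zero h2 hx
      have e : (2*((2*x)⁻¹)^2+2*((2*x)⁻¹)+1) = (2*x^2+2*x+1) * (2*x^2)⁻¹ := by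
        field_simp
        ring
      rw [e, mul_inv, inv_inv]
      ring
  have h' : ∑ x : ZMod p, (2*((2*x)⁻¹)^2+2*((2*x)⁻¹)+1)⁻¹
      = ∑ x : ZMod p, (2*x^2+2*x+1)⁻¹ := by
    simpa [Function.Involutive.toPerm] using h
  rw [← h', Finset.sum_congr rfl (fun x _ => key x), Finset.sum_add_distrib]
  simp [Finset.mul_sum, Finset.sum_ite_eq']
  exact Finset.sum_congr rfl (fun x _ => by ring)

theorem C2_eq (h4 : p % 4 = 3) :
    (∑ x : ZMod p, x^2 * (2*x^2+2*x+1)⁻¹) = 0 := by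
  have a := hA (p := p) h4
  have b := hB (p := p) h4
  have h2 := two_ne_zero' (p := p) h4
  have h2' : (2 : ZMod p) * (∑ x : ZMod p, x^2 * (2*x^2+2*x+1)⁻¹) = 0 := by
    linear_combination b - a
  exact (mul_eq_zero.mp h2').resolve_left h2

theorem C0_eq (h4 : p % 4 = 3) :
    (∑ x : ZMod p, (2*x^2+2*x+1)⁻¹) = 1 := by
  rw [hC h4, C2_eq h4]; ring

theorem rowsum (h4 : p % 4 = 3) {a : ZMod p} (ha : a ≠ 0) :
    ∑ x : ZMod p, (1 - x^2) * (a^2+2*a*x+2*x^2)⁻¹ = (a^2)⁻¹ := by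
  have ha2 : a^2 ≠ 0 := pow_ne_zero _ ha
  have h1 : a^2 * (a^2)⁻¹ = 1 := mul_inv_cancel₀ ha2
  have h := Equiv.sum_comp (Equiv.mulLeft₀ a ha)
      (fun x : ZMod p => (1 - x^2) * (a^2+2*a*x+2*x^2)⁻¹)
  rw [← h]
  have e : ∀ u : ZMod p,
      (1 - (a*u)^2) * (a^2+2*a*(a*u)+2*(a*u)^2)⁻¹
        = (a^2)⁻¹ * (2*u^2+2*u+1)⁻¹ - u^2 * (2*u^2+2*u+1)⁻¹ := by
    intro u
    have expand : a^2+2*a*(a*u)+2*(a*u)^2 = a^2*(2*u^2+2*u+1) := by ring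
    rw [expand, mul_inv]
    linear_combination (-(u^2) * (2*u^2+2*u+1)⁻¹) * h1
  have e' : ∀ u : ZMod p,
      (fun x : ZMod p => (1 - x^2) * (a^2+2*a*x+2*x^2)⁻¹) ((Equiv.mulLeft₀ a ha) u)
        = (a^2)⁻¹ * (2*u^2+2*u+1)⁻¹ - u^2 * (2*u^2+2*u+1)⁻¹ := by
    intro u
    simpa [Equiv.mulLeft₀] using e u
  rw [Finset.sum_congr rfl (fun u _ => e' u), Finset.sum_sub_distrib, ← Finset.mul_sum,
    C0_eq h4, C2_eq h4]
  ring

theorem sum_zmod (g : ZMod p → ZMod p) :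
    ∑ x : ZMod p, g x = ∑ n ∈ Finset.range p, g (n : ZMod p) := by
  have hbij : Function.Bijective (fun n : Fin p => ((n : ℕ) : ZMod p)) := by
    constructor
    · intro a b hab
      have h2 := congrArg ZMod.val hab
      rw [ZMod.val_cast_of_lt a.isLt, ZMod.val_cast_of_lt b.isLt] at h2
      exact Fin.ext h2
    · intro x
      exact ⟨⟨x.val, ZMod.val_lt x⟩, ZMod.natCast_rightInverse x⟩
  rw [← Fin.sum_univ_eq_sum_range (fun n : ℕ => g (n : ZMod p)) p]
  exact (Fintype.sum_bijective _ hbij _ _ (fun n => rfl)).symm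

theorem key_rowsum (h4 : p % 4 = 3) (hp7 : 7 ≤ p) {a : ZMod p} (ha : a ≠ 0) :
    ∑ j : Fin (p - 3), (1 - ((j : ℕ) + 2 : ZMod p)^2)
      * (a^2 + 2*a*((j : ℕ) + 2 : ZMod p) + 2*((j : ℕ) + 2 : ZMod p)^2)⁻¹ = 0 := by
  set G : ZMod p → ZMod p := fun x => (1 - x^2) * (a^2+2*a*x+2*x^2)⁻¹ with hG
  have h1 : ∑ j : Fin (p - 3), G ((j : ℕ) + 2 : ZMod p)
      = ∑ n ∈ Finset.range (p - 3), G ((n : ℕ) + 2 : ZMod p) :=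
    Fin.sum_univ_eq_sum_range (fun n : ℕ => G ((n : ℕ) + 2 : ZMod p)) (p - 3)
  have h2 : ∑ n ∈ Finset.Ico 2 (p-1), G (n : ZMod p)
      = ∑ n ∈ Finset.range (p - 3), G ((n : ℕ) + 2 : ZMod p) := by
    rw [Finset.sum_Ico_eq_sum_range]
    have e : p - 1 - 2 = p - 3 := by omega
    rw [e]
    refine Finset.sum_congr rfl (fun n _ => ?_)
    have : ((2 + n : ℕ) : ZMod p) = ((n : ℕ) + 2 : ZMod p) := by push_cast; ring
    rw [this]
  -- total sum over ZMod p
  have htot : ∑ n ∈ Finset.range p, G (n : ZMod p) = (a^2)⁻¹ := by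
    rw [← sum_zmod]
    exact rowsum h4 ha
  -- split: range p = range (p-1) ∪ {p-1}; range (p-1) = Ico 0 2 ∪ Ico 2 (p-1)
  have hsplit1 : ∑ n ∈ Finset.range p, G (n : ZMod p)
      = (∑ n ∈ Finset.range (p-1), G (n : ZMod p)) + G ((p-1 : ℕ) : ZMod p) := by
    have h := Finset.sum_range_succ (fun n : ℕ => G (n : ZMod p)) (p - 1)
    rw [show p - 1 + 1 = p from by omega] at h
    exact h
  have hsplit2 : ∑ n ∈ Finset.range (p-1), G (n : ZMod p)
      = (∑ n ∈ Finset.range 2, G (n : ZMod p)) + ∑ n ∈ Finset.Ico 2 (p-1), G (n : ZMod p) := by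
    rw [Finset.range_eq_Ico]
    exact (Finset.sum_Ico_consecutive _ (by omega : 0 ≤ 2) (by omega : 2 ≤ p - 1)).symm
  have hG0 : G ((0 : ℕ) : ZMod p) = (a^2)⁻¹ := by
    simp only [hG, Nat.cast_zero]
    norm_num
  have hG1 : G ((1 : ℕ) : ZMod p) = 0 := by
    simp only [hG, Nat.cast_one]
    norm_num
  have hGm1 : G ((p-1 : ℕ) : ZMod p) = 0 := by
    have e : ((p-1 : ℕ) : ZMod p) = -1 := by
      have h1p : (1:ℕ) ≤ p := by omega
      push_cast [Nat.cast_sub h1p]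
      simp [ZMod.natCast_self]
    rw [e]
    simp only [hG]
    norm_num
  have hrange2 : ∑ n ∈ Finset.range 2, G (n : ZMod p) = (a^2)⁻¹ := by
    rw [Finset.sum_range_succ, Finset.sum_range_one, hG0, hG1, add_zero]
  have : ∑ n ∈ Finset.Ico 2 (p-1), G (n : ZMod p) = 0 := by
    have := htot
    rw [hsplit1, hsplit2, hrange2, hGm1, add_zero] at this
    linear_combination this
  rw [← h1] at *
  rw [← h2] at *
  exact this

end DpAux

/-- For a prime `p ≡ 7 (mod 8)`, `p` divides
`D_p^-(2,2) = det [(i² + 2ij + 2j²)^(p-2)]_{2 ≤ i,j ≤ p-2}`. -/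
theorem dvd_Dp_minus_two_two (p : ℕ) (hp : p.Prime) (h : p % 8 = 7) :
    (p : ℤ) ∣ Matrix.det (Matrix.of fun i j : Fin (p - 3) =>
      (((i : ℤ) + 2) ^ 2 + 2 * ((i : ℤ) + 2) * ((j : ℤ) + 2)
        + 2 * ((j : ℤ) + 2) ^ 2) ^ (p - 2)) := by
  haveI : Fact p.Prime := ⟨hp⟩
  have h4 : p % 4 = 3 := by omega
  have hp7 : 7 ≤ p := by omega
  set N : Matrix (Fin (p-3)) (Fin (p-3)) ℤ := Matrix.of fun i j : Fin (p - 3) =>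
      (((i : ℤ) + 2) ^ 2 + 2 * ((i : ℤ) + 2) * ((j : ℤ) + 2)
        + 2 * ((j : ℤ) + 2) ^ 2) ^ (p - 2) with hN
  rw [← ZMod.intCast_zmod_eq_zero_iff_dvd]
  have hmap : ((N.det : ℤ) : ZMod p) = (N.map (Int.castRingHom (ZMod p))).det :=
    RingHom.map_det (Int.castRingHom (ZMod p)) N
  rw [hmap, ← Matrix.exists_mulVec_eq_zero_iff]
  -- nonzeroness facts
  have hb : ∀ j : Fin (p - 3), ((j : ℕ) + 2 : ZMod p) ≠ 0 := by
    intro j hj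
    have hcast : ((j.val + 2 : ℕ) : ZMod p) = 0 := by push_cast; exact hj
    rw [ZMod.natCast_eq_zero_iff] at hcast
    have hle := Nat.le_of_dvd (by omega) hcast
    have := j.isLt
    omega
  refine ⟨fun j => 1 - ((j : ℕ) + 2 : ZMod p)^2, ?_, ?_⟩
  · intro hv
    have h0 := congrFun hv ⟨0, by omega⟩
    simp only [Pi.zero_apply] at h0
    have h3 : ((3 : ℕ) : ZMod p) = 0 := by
      push_cast at h0 ⊢
      linear_combination -h0
    rw [ZMod.natCast_eq_zero_iff] at h3
    have := Nat.le_of_dvd (by norm_num) h3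
    omega
  · funext i
    have ha := hb i
    have hrow := DpAux.key_rowsum h4 hp7 ha
    rw [Matrix.mulVec, Pi.zero_apply]
    rw [← hrow]
    refine Finset.sum_congr rfl (fun j _ => ?_)
    have hF := DpAux.F_ne_zero h4 (x := ((j : ℕ) + 2 : ZMod p)) ha
    have hentry : (N.map (Int.castRingHom (ZMod p))) i j
        = (((i : ℕ) + 2 : ZMod p)^2 + 2*((i : ℕ) + 2 : ZMod p)*((j : ℕ) + 2 : ZMod p)
            + 2*((j : ℕ) + 2 : ZMod p)^2)⁻¹ := by
      rw [← DpAux.pow_sub_two hF]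
      simp only [Matrix.map_apply, hN, Matrix.of_apply, Int.coe_castRingHom]
      push_cast
      ring
    simp only [dotProduct]
    rw [hentry]
    ring
end

section
/- Let p > 5 be a prime with p ≡ 2 (mod 3). Then p divides D_p^-(3,3), the determinant of the (p-3)×(p-3) integer matrix whose (i,j)-entry is (i² + 3ij + 3j²)^(p-2) for 2 ≤ i, j ≤ p-2. -/
section Aux

variable {p : ℕ} [Fact p.Prime]

/-- Cubing is injective on `ZMod p` when `p ≡ 2 (mod 3)`. -/
lemma aux_cube_inj (h3 : p % 3 = 2) {a b : ZMod p} (hab : a ^ 3 = b ^ 3) : a = b := by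
  have hp := (Fact.out : p.Prime)
  by_cases hb : b = 0
  · subst hb
    simpa [pow_eq_zero_iff] using hab
  · have ha : a ≠ 0 := by
      intro ha; apply hb
      rw [ha] at hab
      simpa [pow_eq_zero_iff] using hab.symm
    set u : ZMod p := a * b⁻¹ with hu
    have hu3 : u ^ 3 = 1 := by
      rw [hu, mul_pow, inv_pow, hab, mul_inv_cancel₀ (pow_ne_zero _ hb)]
    have hune : u ≠ 0 := mul_ne_zero ha (inv_ne_zero hb)
    have hup : u ^ (p - 1) = 1 := ZMod.pow_card_sub_one_eq_one hune
    have hd3 : orderOf u ∣ 3 := orderOf_dvd_of_pow_eq_one hu3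
    have hdp : orderOf u ∣ p - 1 := orderOf_dvd_of_pow_eq_one hup
    have hcop : Nat.Coprime 3 (p - 1) := by
      have h2 : 2 ≤ p := hp.two_le
      refine (Nat.prime_three).coprime_iff_not_dvd.mpr ?_
      omega
    have hord : orderOf u = 1 := by
      have hd : orderOf u ∣ 1 := by
        have := Nat.dvd_gcd hd3 hdp
        rwa [Nat.Coprime.gcd_eq_one hcop] at this
      exact Nat.dvd_one.mp hd
    have hu1 : u = 1 := orderOf_eq_one_iff.mp hord
    exact (mul_inv_eq_one₀ hb).mp hu1

/-- `a ^ (p - 2) = a⁻¹` in `ZMod p` for nonzero `a`. -/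
lemma aux_pow_sub_two {a : ZMod p} (ha : a ≠ 0) : a ^ (p - 2) = a⁻¹ := by
  have hp := (Fact.out : p.Prime)
  have h2 : 2 ≤ p := hp.two_le
  have : a ^ (p - 2) * a = 1 := by
    rw [← pow_succ]
    have : p - 2 + 1 = p - 1 := by omega
    rw [this]
    exact ZMod.pow_card_sub_one_eq_one ha
  exact eq_inv_of_mul_eq_one_left this

/-- The quadratic form is nonzero when `x ≠ 0` and `p ≡ 2 (mod 3)`. -/
lemma aux_Q_ne_zero (h3 : p % 3 = 2) {x : ZMod p} (hx : x ≠ 0) (y : ZMod p) :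
    x ^ 2 + 3 * x * y + 3 * y ^ 2 ≠ 0 := by
  intro hQ
  apply hx
  have hc : (x + y) ^ 3 = y ^ 3 := by linear_combination x * hQ
  have h' := aux_cube_inj h3 hc
  linear_combination h'

/-- Sum of `y^k` over `ZMod p` vanishes for `k < p - 1`. -/
lemma aux_sum_pow (hp5 : 5 < p) {k : ℕ} (hk : k < p - 1) :
    ∑ y : ZMod p, y ^ k = 0 := by
  have := FiniteField.sum_pow_lt_card_sub_one (K := ZMod p) k (by rwa [ZMod.card])
  exact this

/-- Sum of a constant over `ZMod p` vanishes. -/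
lemma aux_sum_const (c : ZMod p) : ∑ _y : ZMod p, c = 0 := by
  rw [Finset.sum_const, Finset.card_univ, ZMod.card, nsmul_eq_mul, ZMod.natCast_self, zero_mul]

/-- Key identity: the kernel relation for every nonzero `x`. -/
lemma aux_key (hp5 : 5 < p) (h3 : p % 3 = 2) {x : ZMod p} (hx : x ≠ 0) :
    ∑ y : ZMod p, (x ^ 2 + 3 * x * y + 3 * y ^ 2) ^ (p - 2) * (y ^ 9 - y ^ 3) = 0 := by
  have hpodd : (2 : ZMod p) ≠ 0 := by
    have : ((2 : ℕ) : ZMod p) ≠ 0 := by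
      rw [Ne, ZMod.natCast_eq_zero_iff]
      intro hd
      have := Nat.le_of_dvd (by norm_num) hd
      omega
    simpa using this
  set f : ZMod p → ZMod p :=
    fun y => (x ^ 2 + 3 * x * y + 3 * y ^ 2) ^ (p - 2) * (y ^ 9 - y ^ 3) with hf
  -- reindex by the involution y ↦ -x - y
  have hinv : Function.Involutive (fun y : ZMod p => -x - y) := fun y => by ring
  have hre : ∑ y : ZMod p, f (-x - y) = ∑ y : ZMod p, f y :=
    Fintype.sum_bijective _ hinv.bijective _ _ (fun y => rfl)
  -- pairwise sum is an explicit polynomial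
  have hpair : ∀ y : ZMod p, f y + f (-x - y) =
      x - x * (x + y) ^ 6 - x * ((x + y) ^ 3 * y ^ 3) - x * y ^ 6 := by
    intro y
    have hQ := aux_Q_ne_zero h3 hx y
    have hQσ : x ^ 2 + 3 * x * (-x - y) + 3 * (-x - y) ^ 2
        = x ^ 2 + 3 * x * y + 3 * y ^ 2 := by ring
    rw [hf]
    simp only [hQσ]
    rw [aux_pow_sub_two hQ]
    rw [← mul_add, inv_mul_eq_iff_eq_mul₀ hQ]
    ring
  -- sum the polynomial
  have hsum : ∑ y : ZMod p,
      (x - x * (x + y) ^ 6 - x * ((x + y) ^ 3 * y ^ 3) - x * y ^ 6) = 0 := by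
    have hexp : ∀ y : ZMod p,
        x - x * (x + y) ^ 6 - x * ((x + y) ^ 3 * y ^ 3) - x * y ^ 6 =
        (x - x ^ 7) + (-(6 * x ^ 6)) * y ^ 1 + (-(15 * x ^ 5)) * y ^ 2
          + (-(21 * x ^ 4)) * y ^ 3 + (-(18 * x ^ 3)) * y ^ 4
          + (-(9 * x ^ 2)) * y ^ 5 + (-(3 * x)) * y ^ 6 := fun y => by ring
    rw [Finset.sum_congr rfl fun y _ => hexp y]
    simp only [Finset.sum_add_distrib, ← Finset.mul_sum]
    rw [aux_sum_const, aux_sum_pow hp5 (by omega), aux_sum_pow hp5 (by omega),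
      aux_sum_pow hp5 (by omega), aux_sum_pow hp5 (by omega), aux_sum_pow hp5 (by omega),
      aux_sum_pow hp5 (by omega)]
    ring
  have h2S : (2 : ZMod p) * ∑ y : ZMod p, f y = 0 := by
    rw [two_mul]
    calc (∑ y : ZMod p, f y) + ∑ y : ZMod p, f y
        = (∑ y : ZMod p, f y) + ∑ y : ZMod p, f (-x - y) := by rw [hre]
      _ = ∑ y : ZMod p, (f y + f (-x - y)) := by rw [Finset.sum_add_distrib]
      _ = ∑ y : ZMod p, (x - x * (x + y) ^ 6 - x * ((x + y) ^ 3 * y ^ 3) - x * y ^ 6) :=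
          Finset.sum_congr rfl fun y _ => hpair y
      _ = 0 := hsum
  exact (mul_eq_zero.mp h2S).resolve_left hpodd

end Aux

/-- For a prime `p > 5` with `p ≡ 2 (mod 3)`, `p` divides
`D_p^-(3,3) = det [(i² + 3ij + 3j²)^(p-2)]_{2 ≤ i,j ≤ p-2}`. -/
theorem dvd_Dp_minus_three_three (p : ℕ) (hp : p.Prime) (hp5 : 5 < p) (h : p % 3 = 2) :
    (p : ℤ) ∣ Matrix.det (Matrix.of fun i j : Fin (p - 3) =>
      (((i : ℤ) + 2) ^ 2 + 3 * ((i : ℤ) + 2) * ((j : ℤ) + 2)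
        + 3 * ((j : ℤ) + 2) ^ 2) ^ (p - 2)) := by
  haveI : Fact p.Prime := ⟨hp⟩
  set K := ZMod p
  -- the matrix over `ZMod p`
  set N : Matrix (Fin (p - 3)) (Fin (p - 3)) K := Matrix.of fun i j =>
    (((i : ℕ) : K) + 2) ^ 2 + 3 * (((i : ℕ) : K) + 2) * (((j : ℕ) : K) + 2)
      + 3 * (((j : ℕ) : K) + 2) ^ 2 with hN
  rw [← ZMod.intCast_zmod_eq_zero_iff_dvd]
  have hmap : ((Matrix.det (Matrix.of fun i j : Fin (p - 3) =>
      (((i : ℤ) + 2) ^ 2 + 3 * ((i : ℤ) + 2) * ((j : ℤ) + 2)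
        + 3 * ((j : ℤ) + 2) ^ 2) ^ (p - 2)) : ℤ) : K)
      = Matrix.det (Matrix.of fun i j : Fin (p - 3) => (N i j) ^ (p - 2)) := by
    rw [show ((Matrix.det (Matrix.of fun i j : Fin (p - 3) =>
      (((i : ℤ) + 2) ^ 2 + 3 * ((i : ℤ) + 2) * ((j : ℤ) + 2)
        + 3 * ((j : ℤ) + 2) ^ 2) ^ (p - 2)) : ℤ) : K)
      = (Int.castRingHom K) (Matrix.det (Matrix.of fun i j : Fin (p - 3) =>
      (((i : ℤ) + 2) ^ 2 + 3 * ((i : ℤ) + 2) * ((j : ℤ) + 2)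
        + 3 * ((j : ℤ) + 2) ^ 2) ^ (p - 2))) from rfl, RingHom.map_det]
    congr 1
    ext i j
    simp only [RingHom.mapMatrix_apply, Matrix.map_apply, Matrix.of_apply, hN,
      Int.coe_castRingHom]
    push_cast
    simp only [K]
    push_cast
    ring
  rw [hmap]
  -- kernel vector
  set v : Fin (p - 3) → K := fun j => (((j : ℕ) : K) + 2) ^ 9 - (((j : ℕ) : K) + 2) ^ 3 with hv
  rw [← Matrix.exists_mulVec_eq_zero_iff]
  refine ⟨v, ?_, ?_⟩
  · -- v ≠ 0
    intro h0
    have h00 := congrFun h0 ⟨0, by omega⟩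
    simp only [hv, Pi.zero_apply] at h00
    norm_num at h00
    -- h00 : (504 : K) = 0  (roughly); derive contradiction
    have h504 : ((504 : ℕ) : K) = 0 := by push_cast; linear_combination h00
    rw [ZMod.natCast_eq_zero_iff] at h504
    have h8 : (504 : ℕ) = 2 ^ 3 * (3 ^ 2 * 7) := by norm_num
    rw [h8] at h504
    rcases (Nat.Prime.dvd_mul hp).mp h504 with hd | hd
    · have := hp.dvd_of_dvd_pow hd
      have := Nat.le_of_dvd (by norm_num) this
      omega
    · rcases (Nat.Prime.dvd_mul hp).mp hd with hd2 | hd2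
      · have := hp.dvd_of_dvd_pow hd2
        have := Nat.le_of_dvd (by norm_num) this
        omega
      · have h7 : p = 7 := (Nat.prime_dvd_prime_iff_eq hp (by norm_num)).mp hd2
        omega
  · -- mulVec = 0
    funext i
    set x : K := ((i : ℕ) : K) + 2 with hx
    have hxne : x ≠ 0 := by
      rw [hx]
      have : (((i : ℕ) + 2 : ℕ) : K) ≠ 0 := by
        rw [Ne, ZMod.natCast_eq_zero_iff]
        intro hd
        have hi := i.isLt
        have := Nat.le_of_dvd (by omega) hd
        omega
      push_cast at this
      exact this
    set F : K → K := fun y => (x ^ 2 + 3 * x * y + 3 * y ^ 2) ^ (p - 2) * (y ^ 9 - y ^ 3)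
      with hF
    set e : Fin (p - 3) → K := fun j => ((j : ℕ) : K) + 2 with he
    have hinj : Function.Injective e := by
      intro a b hab
      simp only [he] at hab
      have hab' : (((a : ℕ) : ℕ) : K) = ((b : ℕ) : K) := by
        push_cast
        linear_combination hab
      have ha' : ((a : ℕ) : K).val = (a : ℕ) := ZMod.val_cast_of_lt (by omega)
      have hb' : ((b : ℕ) : K).val = (b : ℕ) := ZMod.val_cast_of_lt (by omega)
      apply Fin.ext
      rw [← ha', ← hb']
      push_cast at hab'
      rw [hab']
    have hzero : ∀ y ∈ Finset.univ, y ∉ Finset.univ.image e → F y = 0 := by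
      intro y _ hy
      have hyv : y.val < p := ZMod.val_lt y
      have hy2 : ¬(2 ≤ y.val ∧ y.val ≤ p - 2) := by
        intro ⟨hl, hr⟩
        apply hy
        refine Finset.mem_image.mpr ⟨⟨y.val - 2, by omega⟩, Finset.mem_univ _, ?_⟩
        simp only [he]
        show ((y.val - 2 : ℕ) : K) + 2 = y
        have hval : ((y.val - 2 + 2 : ℕ) : K) = ((y.val : ℕ) : K) := by
          congr 1
          omega
        push_cast at hval
        rw [hval]
        exact ZMod.natCast_rightInverse y
      have hy3 : y = 0 ∨ y = 1 ∨ y = -1 := by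
        have hc : y.val = 0 ∨ y.val = 1 ∨ y.val = p - 1 := by omega
        have hyy : ((y.val : ℕ) : K) = y := ZMod.natCast_rightInverse y
        rcases hc with hc | hc | hc
        · left; rw [← hyy, hc]; norm_num
        · right; left; rw [← hyy, hc]; norm_num
        · right; right
          rw [← hyy, hc]
          have hps : ((p - 1 : ℕ) : K) = ((p : ℕ) : K) - 1 := by
            rw [Nat.cast_sub (by omega)]
            norm_num
          rw [hps, ZMod.natCast_self]
          ring
      have : y ^ 9 - y ^ 3 = 0 := by
        rcases hy3 with rfl | rfl | rfl <;> norm_num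
      simp only [hF, this, mul_zero]
    have hsum : (∑ j : Fin (p - 3), F (e j)) = ∑ y : K, F y := by
      rw [← Finset.sum_image (fun a _ b _ h => hinj h)]
      exact Finset.sum_subset (Finset.subset_univ _) hzero
    have hkey := aux_key (p := p) hp5 h hxne
    show ∑ j, (Matrix.of fun i j : Fin (p - 3) => (N i j) ^ (p - 2)) i j * v j = 0
    calc ∑ j, (Matrix.of fun i j : Fin (p - 3) => (N i j) ^ (p - 2)) i j * v j
        = ∑ j : Fin (p - 3), F (e j) := by
          refine Finset.sum_congr rfl fun j _ => ?_
          simp only [Matrix.of_apply, hN, hv, hF, he, hx]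
      _ = ∑ y : K, F y := hsum
      _ = 0 := by rw [hF]; exact hkey
end

section
/- Let p be a prime with p ≡ 7 (mod 8), and let a_0, a_1, ..., a_{p-2} ∈ 𝔽_p be the coefficients of the unique polynomial P(T) over 𝔽_p of degree at most p-2 with P(t) = (t² + 2t + 2)^(p-2) for all nonzero t ∈ 𝔽_p. For k = 0, 1, ..., p-2 set â_k := ∏ a_j, the product over all j with 0 ≤ j ≤ p-2, j ≡ k (mod 2), and j ≠ k. Then D_p^-(2,2) ≡ 4 · (Σ_{i=0}^{(p-3)/2} â_{2i}) · (Σ_{i=0}^{(p-3)/2} â_{2i+1}) (mod p), where D_p^-(2,2) := det[(i² + 2ij + 2j²)^(p-2)]_{2 ≤ i,j ≤ p-2}. -/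
/-!
Both sides vanish modulo `p`. Put `Q(s) = 2s² + 2s + 1`, so `2Q(s) = (2s + 1)² + 1`. As
`p ≡ 3 (mod 4)`, `-1` is not a square in `𝔽_p`, hence `Q` has no roots. The involution
`s ↦ -1 - s` fixes `Q` and negates `2s + 1`, so `∑ₛ (2s + 1)/Q(s) = 0`; since the remainders of
`s²` and `s⁶` modulo `Q` are multiples of `2s + 1`, also `∑ₛ s²/Q(s) = ∑ₛ s⁶/Q(s) = 0`.

The vector `x ↦ x² - x⁶` lies in the kernel of the matrix: substituting `x = a s` turns row `a` into
`∑ₛ s²/Q(s) - a⁴ ∑ₛ s⁶/Q(s)`, and the vector vanishes at the omitted columns `x = 0, ±1`.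
On the other side, extracting coefficients by power sums and substituting `t = 1/s` gives
`-a_k = ∑ₛ s^(k+2)/Q(s)`, so `a₀ = a₄ = 0`, and each `â_{2i}` has `a₀` or `a₄` as a factor.
-/

open Finset Polynomial

theorem two_ne_zero_of_not_isSquare_neg_one {F : Type*} [Field F] (hF : ¬IsSquare (-1 : F)) :
    (2 : F) ≠ 0 := by
  intro h
  exact hF ⟨1, by linear_combination -h⟩

theorem two_mul_sq_add_two_mul_add_one_ne_zero {F : Type*} [Field F] (hF : ¬IsSquare (-1 : F))
    (s : F) : 2 * s ^ 2 + 2 * s + 1 ≠ 0 := by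
  intro h
  exact hF ⟨2 * s + 1, by linear_combination -2 * h⟩

namespace FiniteField

variable {K : Type*} [Field K] [Fintype K]

local notation "q" => Fintype.card K

theorem sum_two_mul_add_one_div (h2 : (2 : K) ≠ 0) :
    ∑ s : K, (2 * s + 1) / (2 * s ^ 2 + 2 * s + 1) = 0 := by
  set S := ∑ s : K, (2 * s + 1) / (2 * s ^ 2 + 2 * s + 1)
  have hS : S = -S := by
    rw [← sum_neg_distrib]
    refine Fintype.sum_equiv (Equiv.subLeft (-1)) _ _ fun s => ?_
    rw [Equiv.subLeft_apply, ← neg_div]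
    ring_nf
  exact (mul_eq_zero.mp (show 2 * S = 0 by linear_combination hS)).resolve_left h2

theorem sum_sq_div (hK : ¬IsSquare (-1 : K)) :
    ∑ s : K, s ^ 2 / (2 * s ^ 2 + 2 * s + 1) = 0 := by
  have h2 := two_ne_zero_of_not_isSquare_neg_one hK
  have key (s : K) : 2 * s ^ 2 / (2 * s ^ 2 + 2 * s + 1)
      = 1 - (2 * s + 1) / (2 * s ^ 2 + 2 * s + 1) := by
    rw [eq_sub_iff_add_eq, ← add_div,
      div_eq_one_iff_eq (two_mul_sq_add_two_mul_add_one_ne_zero hK s)]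
    ring
  have h : 2 * ∑ s : K, s ^ 2 / (2 * s ^ 2 + 2 * s + 1) = 0 := by
    simp_rw [mul_sum, ← mul_div_assoc, key, sum_sub_distrib, sum_two_mul_add_one_div h2,
      sum_const, card_univ, nsmul_one, cast_card_eq_zero, sub_zero]
  exact (mul_eq_zero.mp h).resolve_left h2

theorem sum_pow_six_div (hK : ¬IsSquare (-1 : K)) (hq : 5 < q) :
    ∑ s : K, s ^ 6 / (2 * s ^ 2 + 2 * s + 1) = 0 := by
  have h2 := two_ne_zero_of_not_isSquare_neg_one hK
  have key (s : K) : 8 * s ^ 6 / (2 * s ^ 2 + 2 * s + 1)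
      = 4 * s ^ 4 - 4 * s ^ 3 + 2 * s ^ 2 - s ^ 0 + (2 * s + 1) / (2 * s ^ 2 + 2 * s + 1) := by
    rw [← sub_eq_iff_eq_add, ← sub_div,
      div_eq_iff (two_mul_sq_add_two_mul_add_one_ne_zero hK s)]
    ring
  have hpow (i : ℕ) (hi : i ≤ 4) : ∑ s : K, s ^ i = 0 := sum_pow_lt_card_sub_one K i (by omega)
  have h : 8 * ∑ s : K, s ^ 6 / (2 * s ^ 2 + 2 * s + 1) = 0 := by
    simp_rw [mul_sum, ← mul_div_assoc, key]
    simp only [sum_add_distrib, sum_sub_distrib, ← mul_sum, sum_two_mul_add_one_div h2,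
      hpow 4 le_rfl, hpow 3 (by norm_num), hpow 2 (by norm_num), hpow 0 (by norm_num)]
    ring
  have h8 : (8 : K) ≠ 0 := by
    rw [show (8 : K) = 2 ^ 3 by norm_num]; exact pow_ne_zero _ h2
  exact (mul_eq_zero.mp h).resolve_left h8

theorem pow_card_sub_two (hq : 2 < q) (a : K) : a ^ (q - 2) = a⁻¹ := by
  rcases eq_or_ne a 0 with rfl | ha
  · rw [zero_pow (by omega), inv_zero]
  · refine eq_inv_of_mul_eq_one_left ?_
    rw [← pow_succ, show q - 2 + 1 = q - 1 by omega, pow_card_sub_one_eq_one a ha]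

theorem sum_units_eq_sum [DecidableEq K] {M : Type*} [AddCommMonoid M] {f : K → M}
    (hf : f 0 = 0) : ∑ u : Kˣ, f u = ∑ x : K, f x := by
  calc ∑ u : Kˣ, f u = ∑ x : {x : K // x ≠ 0}, f x :=
        Fintype.sum_equiv unitsEquivNeZero _ _ fun _ => rfl
    _ = ∑ x ∈ univ.filter (· ≠ 0), f x := (sum_subtype _ (by simp) _).symm
    _ = ∑ x, f x := sum_filter_of_ne fun x _ hx => by rintro rfl; exact hx hf

theorem sum_units_eval_mul_pow [DecidableEq K] (P : K[X]) (hP : P.natDegree < q - 1) {k : ℕ}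
    (hk : k < q - 1) : ∑ u : Kˣ, P.eval (u : K) * (u : K) ^ (q - 1 - k) = -P.coeff k := by
  have hdvd : ∀ j ∈ range (q - 1), q - 1 ∣ j + (q - 1 - k) ↔ j = k := by
    intro j hj
    rw [mem_range] at hj
    constructor
    · rintro ⟨c, hc⟩
      rcases c with _ | _ | c
      · omega
      · omega
      · have := Nat.mul_le_mul_left (q - 1) (show 2 ≤ c + 1 + 1 by omega)
        omega
    · rintro rfl
      exact ⟨1, by omega⟩
  simp_rw [eval_eq_sum_range' hP, sum_mul, mul_assoc, ← pow_add]
  rw [sum_comm]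
  simp_rw [← mul_sum, sum_pow_units]
  rw [sum_congr rfl fun j hj => by
      rw [if_congr (hdvd j hj) rfl rfl, mul_ite, mul_neg_one, mul_zero],
    sum_ite_eq' (range (q - 1)) k, if_pos (mem_range.mpr hk)]

theorem neg_coeff_eq_sum_pow_div [DecidableEq K] (hq : 2 < q) {P : K[X]}
    (hdeg : P.natDegree < q - 1) (hP : ∀ t : K, t ≠ 0 → P.eval t = (t ^ 2 + 2 * t + 2) ^ (q - 2))
    {k : ℕ} (hk : k < q - 1) :
    -P.coeff k = ∑ s : K, s ^ (k + 2) / (2 * s ^ 2 + 2 * s + 1) := by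
  rw [← sum_units_eval_mul_pow P hdeg hk, ← sum_units_eq_sum (K := K) (by simp)]
  refine Fintype.sum_equiv (Equiv.inv Kˣ) _ _ fun u => ?_
  have hu : (u : K) ≠ 0 := u.ne_zero
  have hpow : (u : K) ^ (q - 1 - k) = (u : K)⁻¹ ^ k := by
    refine eq_inv_of_mul_eq_one_left ?_ |>.trans (inv_pow _ _).symm
    rw [← pow_add, Nat.sub_add_cancel hk.le, pow_card_sub_one_eq_one _ hu]
  have hden : 2 * (u : K)⁻¹ ^ 2 + 2 * (u : K)⁻¹ + 1 = (u ^ 2 + 2 * u + 2) * (u : K)⁻¹ ^ 2 := by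
    field_simp
    ring
  rw [hP _ hu, pow_card_sub_two hq, hpow, Equiv.inv_apply, Units.val_inv_eq_inv_val, hden, pow_add,
    mul_div_mul_right _ _ (pow_ne_zero 2 (inv_ne_zero hu)), div_eq_inv_mul]

theorem sum_inv_mul_sq_sub_pow_six (hK : ¬IsSquare (-1 : K)) (hq : 5 < q) {a : K} (ha : a ≠ 0) :
    ∑ x : K, (a ^ 2 + 2 * a * x + 2 * x ^ 2)⁻¹ * (x ^ 2 - x ^ 6) = 0 := by
  calc ∑ x : K, (a ^ 2 + 2 * a * x + 2 * x ^ 2)⁻¹ * (x ^ 2 - x ^ 6)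
      = ∑ s : K, (s ^ 2 / (2 * s ^ 2 + 2 * s + 1)
          - a ^ 4 * (s ^ 6 / (2 * s ^ 2 + 2 * s + 1))) := by
        refine (Fintype.sum_equiv (Equiv.mulLeft₀ a ha) _ _ fun s => ?_).symm
        have hQ := two_mul_sq_add_two_mul_add_one_ne_zero hK s
        simp only [Equiv.mulLeft₀_apply]
        rw [show a ^ 2 + 2 * a * (a * s) + 2 * (a * s) ^ 2
          = a ^ 2 * (2 * s ^ 2 + 2 * s + 1) by ring]
        field_simp
    _ = 0 := by rw [sum_sub_distrib, ← mul_sum, sum_sq_div hK, sum_pow_six_div hK hq]; ring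

end FiniteField

theorem ZMod.sum_fin_sub_three_eq_sum {p : ℕ} [NeZero p] (hp : 3 ≤ p) {M : Type*} [AddCommMonoid M]
    {g : ZMod p → M} (h0 : g 0 = 0) (h1 : g 1 = 0) (hm1 : g (-1) = 0) :
    ∑ j : Fin (p - 3), g ((j : ℕ) + 2) = ∑ x, g x := by
  have hrange : ∑ x, g x = ∑ n ∈ range p, g n :=
    sum_nbij' ZMod.val (fun n => n) (fun x _ => mem_range.mpr x.val_lt) (fun _ _ => mem_univ _)
      (fun x _ => ZMod.natCast_zmod_val x) (fun n hn => ZMod.val_cast_of_lt (mem_range.mp hn))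
      (fun x _ => by rw [ZMod.natCast_zmod_val])
  obtain ⟨m, rfl⟩ : ∃ m, p = m + 3 := ⟨p - 3, by omega⟩
  have hlast : ((m + 2 : ℕ) : ZMod (m + 3)) = -1 := by
    rw [eq_neg_iff_add_eq_zero, ← Nat.cast_one, ← Nat.cast_add, ZMod.natCast_self]
  rw [hrange, sum_range_succ, sum_range_succ', sum_range_succ', Nat.add_sub_cancel,
    ← Fin.sum_univ_eq_sum_range (fun n => g ((n + 1 + 1 : ℕ) : ZMod (m + 3)))]
  simp [hlast, h0, h1, hm1, add_assoc, one_add_one_eq_two]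

def dpMinusMatrix (p : ℕ) (c d : ℤ) : Matrix (Fin (p - 3)) (Fin (p - 3)) ℤ :=
  Matrix.of fun i j => (((i : ℤ) + 2) ^ 2 + c * ((i : ℤ) + 2) * ((j : ℤ) + 2)
    + d * ((j : ℤ) + 2) ^ 2) ^ (p - 2)

theorem cast_det_dpMinusMatrix_two_two {p : ℕ} [Fact p.Prime] (hK : ¬IsSquare (-1 : ZMod p))
    (hp : 5 < p) : ((dpMinusMatrix p 2 2).det : ZMod p) = 0 := by
  have hcard : Fintype.card (ZMod p) = p := ZMod.card p
  have hcast (n : ℕ) (hn : 0 < n) (hnp : n < p) : (n : ZMod p) ≠ 0 := by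
    rw [Ne, ZMod.natCast_eq_zero_iff]
    exact fun h => absurd (Nat.le_of_dvd hn h) (by omega)
  rw [Int.cast_det, ← Matrix.exists_mulVec_eq_zero_iff]
  refine ⟨fun j => (((j : ℕ) : ZMod p) + 2) ^ 2 - (((j : ℕ) : ZMod p) + 2) ^ 6, ?_, ?_⟩
  · -- the entry at `j = 0` is `2² - 2⁶ = -2² · 3 · (1 + 2²)`
    intro hv
    have h0 := congrFun hv ⟨0, by omega⟩
    rw [Pi.zero_apply] at h0
    have h5 : (1 + 2 ^ 2 : ZMod p) ≠ 0 := fun h => hK ⟨2, by linear_combination -h⟩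
    have h3 : ((3 : ℕ) : ZMod p) ≠ 0 := hcast 3 (by norm_num) (by omega)
    refine mul_ne_zero (mul_ne_zero (pow_ne_zero 2
      (two_ne_zero_of_not_isSquare_neg_one hK)) h3) h5 ?_
    push_cast at h0 ⊢
    linear_combination -h0
  · funext i
    have ha : ((i : ℕ) : ZMod p) + 2 ≠ 0 := by exact_mod_cast hcast (i + 2) (by omega) (by omega)
    simp only [Matrix.mulVec, dotProduct, Matrix.map_apply, dpMinusMatrix, Matrix.of_apply,
      Pi.zero_apply]
    push_cast
    have hinv (z : ZMod p) : z ^ (p - 2) = z⁻¹ := by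
      simpa only [hcard] using FiniteField.pow_card_sub_two (by rw [hcard]; omega) z
    simp_rw [hinv]
    rw [ZMod.sum_fin_sub_three_eq_sum (by omega) (g := fun x =>
      ((((i : ℕ) : ZMod p) + 2) ^ 2 + 2 * (((i : ℕ) : ZMod p) + 2) * x + 2 * x ^ 2)⁻¹
        * (x ^ 2 - x ^ 6)) (by simp) (by simp) (by norm_num)]
    exact FiniteField.sum_inv_mul_sq_sub_pow_six hK (by rw [hcard]; omega) ha

theorem sum_prod_filter_parity_eq_zero {R : Type*} [CommSemiring R] {f : ℕ → R} (h0 : f 0 = 0)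
    (h4 : f 4 = 0) {n : ℕ} (hn : 4 < n) (m : ℕ) :
    ∑ i ∈ range m, ∏ j ∈ (range n).filter (fun j => j % 2 = (2 * i) % 2 ∧ j ≠ 2 * i), f j = 0 := by
  refine sum_eq_zero fun i _ => ?_
  by_cases hi : 2 * i = 0
  · exact prod_eq_zero (i := 4) (by simp only [mem_filter, mem_range]; omega) h4
  · exact prod_eq_zero (i := 0) (by simp only [mem_filter, mem_range]; omega) h0

/-- Let `p ≡ 7 (mod 8)` be prime, `P` the polynomial of degree `≤ p-2` over
`𝔽_p` with `P(t) = (t² + 2t + 2)^(p-2)` for all nonzero `t`, with coefficients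
`a_k = P.coeff k` for `0 ≤ k ≤ p-2`.  With
`â_k := ∏_{0 ≤ j ≤ p-2, j ≡ k (mod 2), j ≠ k} a_j`, we have
`D_p^-(2,2) ≡ 4 · (Σ_{i=0}^{(p-3)/2} â_{2i}) · (Σ_{i=0}^{(p-3)/2} â_{2i+1}) (mod p)`. -/
theorem Dp_minus_two_two_congr (p : ℕ) (hp : p.Prime) (h : p % 8 = 7)
    (P : Polynomial (ZMod p)) (hdeg : P.degree ≤ (p - 2 : ℕ))
    (hP : ∀ t : ZMod p, t ≠ 0 → P.eval t = (t ^ 2 + 2 * t + 2) ^ (p - 2)) :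
    ((Matrix.det (Matrix.of fun i j : Fin (p - 3) =>
        (((i : ℤ) + 2) ^ 2 + 2 * ((i : ℤ) + 2) * ((j : ℤ) + 2)
          + 2 * ((j : ℤ) + 2) ^ 2) ^ (p - 2)) : ℤ) : ZMod p)
      = 4 * (∑ i ∈ Finset.range ((p - 3) / 2 + 1),
              ∏ j ∈ (Finset.range (p - 1)).filter
                (fun j => j % 2 = (2 * i) % 2 ∧ j ≠ 2 * i), P.coeff j)
          * (∑ i ∈ Finset.range ((p - 3) / 2 + 1),
              ∏ j ∈ (Finset.range (p - 1)).filter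
                (fun j => j % 2 = (2 * i + 1) % 2 ∧ j ≠ 2 * i + 1), P.coeff j) := by
  have : Fact p.Prime := ⟨hp⟩
  have hcard : Fintype.card (ZMod p) = p := ZMod.card p
  have hK : ¬IsSquare (-1 : ZMod p) := by
    rw [ZMod.exists_sq_eq_neg_one_iff]
    omega
  have hdeg' : P.natDegree < Fintype.card (ZMod p) - 1 := by
    have := natDegree_le_of_degree_le hdeg
    omega
  have hcoeff (k : ℕ) (hk : k < p - 1) :
      -P.coeff k = ∑ s : ZMod p, s ^ (k + 2) / (2 * s ^ 2 + 2 * s + 1) :=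
    FiniteField.neg_coeff_eq_sum_pow_div (by omega) hdeg' (by rwa [hcard]) (by omega)
  have hc0 : P.coeff 0 = 0 :=
    neg_eq_zero.mp ((hcoeff 0 (by omega)).trans (FiniteField.sum_sq_div hK))
  have hc4 : P.coeff 4 = 0 :=
    neg_eq_zero.mp ((hcoeff 4 (by omega)).trans (FiniteField.sum_pow_six_div hK (by omega)))
  rw [sum_prod_filter_parity_eq_zero hc0 hc4 (by omega), mul_zero, zero_mul]
  exact cast_det_dpMinusMatrix_two_two hK (by omega)
end

section
/- Let p > 5 be a prime with p ≡ 2 (mod 3), and let b_0, b_1, ..., b_{p-2} ∈ 𝔽_p be the coefficients of the unique polynomial Q(T) over 𝔽_p of degree at most p-2 with Q(t) = (t² + 3t + 3)^(p-2) for all nonzero t ∈ 𝔽_p. For k = 0, 1, ..., p-2 set b̂_k := ∏ b_j, the product over all j with 0 ≤ j ≤ p-2, j ≡ k (mod 2), and j ≠ k. Then D_p^-(3,3) ≡ 4 · (Σ_{i=0}^{(p-3)/2} b̂_{2i}) · (Σ_{i=0}^{(p-3)/2} b̂_{2i+1}) (mod p), where D_p^-(3,3) := det[(i² + 3ij + 3j²)^(p-2)]_{2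 ≤ i,j ≤ p-2}. -/
open Finset Polynomial

namespace DpAux

variable {p : ℕ} [Fact p.Prime]

lemma p_ge_11 (hp : p.Prime) (hp5 : 5 < p) (h : p % 3 = 2) : 11 ≤ p := by
  by_contra hlt
  push_neg at hlt
  interval_cases p <;> first | omega | exact absurd hp (by decide)

lemma pow_k_cube (hp : p.Prime) (h : p % 3 = 2) (a : ZMod p) :
    a ^ (3 * ((2 * (p - 1) + 1) / 3)) = a := by
  have hp2 : 2 ≤ p := hp.two_le
  have h3 : 3 * ((2 * (p - 1) + 1) / 3) = 2 * (p - 1) + 1 := by omega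
  rw [h3]
  by_cases ha : a = 0
  · subst ha; rw [zero_pow (by omega)]
  · rw [pow_add, mul_comm 2 (p - 1), pow_mul, ZMod.pow_card_sub_one_eq_one ha,
      one_pow, one_mul, pow_one]

lemma cube_pow_k (hp : p.Prime) (h : p % 3 = 2) (a : ZMod p) :
    (a ^ 3) ^ ((2 * (p - 1) + 1) / 3) = a := by
  rw [← pow_mul]; exact pow_k_cube hp h a

lemma k_pow_cube (hp : p.Prime) (h : p % 3 = 2) (a : ZMod p) :
    (a ^ ((2 * (p - 1) + 1) / 3)) ^ 3 = a := by
  rw [← pow_mul, mul_comm]; exact pow_k_cube hp h a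

lemma cube_inj (hp : p.Prime) (h : p % 3 = 2) {a b : ZMod p} (hab : a ^ 3 = b ^ 3) :
    a = b := by
  have := cube_pow_k hp h a
  rw [hab, cube_pow_k hp h b] at this
  exact this.symm

lemma quad_ne_zero (hp : p.Prime) (h : p % 3 = 2) {x : ZMod p} (hx : x ≠ 0) :
    x ^ 2 + 3 * x + 3 ≠ 0 := by
  intro h0
  apply hx
  have hc : (x + 1) ^ 3 = 1 ^ 3 := by linear_combination x * h0
  have := cube_inj hp h hc
  linear_combination this

lemma sum_units_eq (f : ZMod p → ZMod p) :
    ∑ x ∈ univ.filter (fun x : ZMod p => x ≠ 0), f x = ∑ x : (ZMod p)ˣ, f x := by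
  classical
  refine Finset.sum_nbij' (fun x : ZMod p => if hx : x = 0 then 1 else Units.mk0 x hx)
    (fun u : (ZMod p)ˣ => (u : ZMod p)) ?_ ?_ ?_ ?_ ?_
  · intro x _; exact mem_univ _
  · intro u _; simp [Units.ne_zero u]
  · intro x hx
    simp only [mem_filter] at hx
    simp [dif_neg hx.2]
  · intro u _; simp [dif_neg (Units.ne_zero u)]
  · intro x hx
    simp only [mem_filter] at hx
    simp [dif_neg hx.2]

lemma sum_pow_T (m : ℕ) :
    ∑ x ∈ univ.filter (fun x : ZMod p => x ≠ 0), x ^ m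
      = if (p - 1) ∣ m then -1 else 0 := by
  classical
  rw [sum_units_eq (fun x => x ^ m)]
  have := FiniteField.sum_pow_units (ZMod p) m
  rw [ZMod.card] at this
  rw [← this]

lemma coeff_eq_sum (Q : Polynomial (ZMod p))
    (hdeg : Q.degree ≤ (p - 2 : ℕ)) (hp2 : 2 ≤ p) {k : ℕ} (hk : k ≤ p - 2) :
    ∑ x ∈ univ.filter (fun x : ZMod p => x ≠ 0), x ^ (p - 1 - k) * Q.eval x
      = -Q.coeff k := by
  classical
  have hnd : Q.natDegree < p - 1 :=
    lt_of_le_of_lt (natDegree_le_iff_degree_le.mpr hdeg) (by omega)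
  calc ∑ x ∈ univ.filter (fun x : ZMod p => x ≠ 0), x ^ (p - 1 - k) * Q.eval x
      = ∑ x ∈ univ.filter (fun x : ZMod p => x ≠ 0),
          ∑ l ∈ range (p - 1), Q.coeff l * x ^ (p - 1 - k + l) := by
        refine sum_congr rfl fun x _ => ?_
        rw [eval_eq_sum_range' hnd, mul_sum]
        exact sum_congr rfl fun l _ => by rw [pow_add]; ring
    _ = ∑ l ∈ range (p - 1), Q.coeff l *
          ∑ x ∈ univ.filter (fun x : ZMod p => x ≠ 0), x ^ (p - 1 - k + l) := by
        rw [Finset.sum_comm]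
        exact sum_congr rfl fun l _ => by rw [mul_sum]
    _ = ∑ l ∈ range (p - 1), (if l = k then -Q.coeff l else 0) := by
        refine sum_congr rfl fun l hl => ?_
        rw [sum_pow_T]
        rw [mem_range] at hl
        have hiff : (p - 1) ∣ (p - 1 - k + l) ↔ l = k := by
          constructor
          · intro hd
            have hd' : (p - 1) ∣ (p - 1 - k + l - (p - 1)) := Nat.dvd_sub hd dvd_rfl
            have := Nat.eq_zero_of_dvd_of_lt hd'
            have h1 : p - 1 ≤ p - 1 - k + l := Nat.le_of_dvd (by omega) hd
            have h2 : p - 1 - k + l - (p - 1) = 0 :=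
              Nat.eq_zero_of_dvd_of_lt hd' (by omega)
            omega
          · rintro rfl; exact ⟨1, by omega⟩
        by_cases hlk : l = k
        · rw [if_pos (hiff.mpr hlk), if_pos hlk]; ring
        · rw [if_neg (fun hd => hlk (hiff.mp hd)), if_neg hlk, mul_zero]
    _ = -Q.coeff k := by
        rw [Finset.sum_ite_eq' (range (p - 1)) k (fun l => -Q.coeff l),
          if_pos (mem_range.mpr (by omega))]


section main
variable (hp : p.Prime) (hp5 : 5 < p) (h : p % 3 = 2)
  (Q : Polynomial (ZMod p)) (hdeg : Q.degree ≤ (p - 2 : ℕ))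
  (hQ : ∀ t : ZMod p, t ≠ 0 → Q.eval t = (t ^ 2 + 3 * t + 3) ^ (p - 2))

include hp hp5 h hdeg hQ

lemma coeff_one_eq_zero : Q.coeff 1 = 0 := by
  classical
  have hp11 : 11 ≤ p := p_ge_11 hp hp5 h
  have h1 : ∑ x ∈ univ.filter (fun x : ZMod p => x ≠ 0), x ^ (p - 1 - 1) * Q.eval x
      = -Q.coeff 1 := coeff_eq_sum Q hdeg (by omega) (by omega)
  have h2 : ∑ x ∈ univ.filter (fun x : ZMod p => x ≠ 0), x ^ (p - 1 - 1) * Q.eval x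
      = ∑ x ∈ univ.filter (fun x : ZMod p => x ≠ 0), ((x + 1) ^ 3 - 1) ^ (p - 2) := by
    refine sum_congr rfl fun x hx => ?_
    rw [mem_filter] at hx
    rw [hQ x hx.2, show p - 1 - 1 = p - 2 by omega, ← mul_pow]
    congr 1
    ring
  set k0 := (2 * (p - 1) + 1) / 3 with hk0
  have h3 : ∑ x ∈ univ.filter (fun x : ZMod p => x ≠ 0), ((x + 1) ^ 3 - 1) ^ (p - 2)
      = ∑ u ∈ univ.filter (fun u : ZMod p => u ≠ 0), u ^ (p - 2) := by
    refine Finset.sum_nbij' (fun x => (x + 1) ^ 3 - 1) (fun u => (u + 1) ^ k0 - 1)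
      ?_ ?_ ?_ ?_ ?_
    · intro x hx
      rw [mem_filter] at hx ⊢
      refine ⟨mem_univ _, fun h0 => hx.2 ?_⟩
      have : (x + 1) ^ 3 = 1 ^ 3 := by rw [one_pow]; linear_combination h0
      have := cube_inj hp h this
      linear_combination this
    · intro u hu
      rw [mem_filter] at hu ⊢
      refine ⟨mem_univ _, fun h0 => hu.2 ?_⟩
      have h1' : (u + 1) ^ k0 = 1 := by linear_combination h0
      have : ((u + 1) ^ k0) ^ 3 = 1 := by rw [h1']; ring
      rw [k_pow_cube hp h] at this
      linear_combination this
    · intro x _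
      show ((x + 1) ^ 3 - 1 + 1) ^ k0 - 1 = x
      rw [show (x + 1) ^ 3 - 1 + 1 = (x + 1) ^ 3 by ring, cube_pow_k hp h]
      ring
    · intro u _
      show ((u + 1) ^ k0 - 1 + 1) ^ 3 - 1 = u
      rw [show (u + 1) ^ k0 - 1 + 1 = (u + 1) ^ k0 by ring, k_pow_cube hp h]
      ring
    · intro x _; rfl
  rw [h2, h3, sum_pow_T, if_neg (fun hd => by have := Nat.le_of_dvd (by omega) hd; omega)] at h1
  linear_combination h1
lemma coeff_rec {k : ℕ} (hk : k + 2 ≤ p - 2) :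
    Q.coeff k + 3 * Q.coeff (k + 1) + 3 * Q.coeff (k + 2) = 0 := by
  classical
  have hp11 : 11 ≤ p := p_ge_11 hp hp5 h
  set T := univ.filter (fun x : ZMod p => x ≠ 0) with hT
  set m := p - 3 - k with hm
  have e0 : p - 1 - k = m + 2 := by omega
  have e1 : p - 1 - (k + 1) = m + 1 := by omega
  have e2 : p - 1 - (k + 2) = m := by omega
  have h0 : ∑ x ∈ T, x ^ (m + 2) * Q.eval x = -Q.coeff k := by
    rw [← e0]; exact coeff_eq_sum Q hdeg (by omega) (by omega)
  have h1 : ∑ x ∈ T, x ^ (m + 1) * Q.eval x = -Q.coeff (k + 1) := by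
    rw [← e1]; exact coeff_eq_sum Q hdeg (by omega) (by omega)
  have h2 : ∑ x ∈ T, x ^ m * Q.eval x = -Q.coeff (k + 2) := by
    rw [← e2]; exact coeff_eq_sum Q hdeg (by omega) (by omega)
  have key : ∑ x ∈ T, (x ^ (m + 2) * Q.eval x + 3 * (x ^ (m + 1) * Q.eval x)
      + 3 * (x ^ m * Q.eval x)) = 0 := by
    have heach : ∀ x ∈ T, x ^ (m + 2) * Q.eval x + 3 * (x ^ (m + 1) * Q.eval x)
        + 3 * (x ^ m * Q.eval x) = x ^ m := by
      intro x hx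
      rw [hT, mem_filter] at hx
      have hnz := quad_ne_zero hp h hx.2
      have hpow : (x ^ 2 + 3 * x + 3) ^ (p - 1) = 1 :=
        ZMod.pow_card_sub_one_eq_one hnz
      have hsplit : (x ^ 2 + 3 * x + 3) ^ (p - 1)
          = (x ^ 2 + 3 * x + 3) ^ (p - 2) * (x ^ 2 + 3 * x + 3) := by
        rw [← pow_succ]; congr 1; omega
      rw [hQ x hx.2]
      calc x ^ (m + 2) * (x ^ 2 + 3 * x + 3) ^ (p - 2)
            + 3 * (x ^ (m + 1) * (x ^ 2 + 3 * x + 3) ^ (p - 2))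
            + 3 * (x ^ m * (x ^ 2 + 3 * x + 3) ^ (p - 2))
          = x ^ m * ((x ^ 2 + 3 * x + 3) ^ (p - 2) * (x ^ 2 + 3 * x + 3)) := by
            rw [pow_add, pow_add]; ring
        _ = x ^ m := by rw [← hsplit, hpow, mul_one]
    rw [sum_congr rfl heach, sum_pow_T,
      if_neg (fun hd => by have := Nat.le_of_dvd (by omega) hd; omega)]
  rw [Finset.sum_add_distrib, Finset.sum_add_distrib, ← Finset.mul_sum, ← Finset.mul_sum,
    h0, h1, h2] at key
  linear_combination -key

lemma coeff_seven_eq_zero : Q.coeff 7 = 0 := by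
  have hp11 : 11 ≤ p := p_ge_11 hp hp5 h
  have hb1 : Q.coeff 1 = 0 := coeff_one_eq_zero hp hp5 h Q hdeg hQ
  have r1 := coeff_rec hp hp5 h Q hdeg hQ (k := 1) (by omega)
  have r2 := coeff_rec hp hp5 h Q hdeg hQ (k := 2) (by omega)
  have r3 := coeff_rec hp hp5 h Q hdeg hQ (k := 3) (by omega)
  have r4 := coeff_rec hp hp5 h Q hdeg hQ (k := 4) (by omega)
  have r5 := coeff_rec hp hp5 h Q hdeg hQ (k := 5) (by omega)
  have h27 : (27 : ZMod p) ≠ 0 := by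
    have : ((27 : ℕ) : ZMod p) ≠ 0 := by
      rw [Ne, ZMod.natCast_eq_zero_iff]
      intro hdvd
      have := Nat.le_of_dvd (by norm_num) hdvd
      interval_cases p <;> omega
    simpa using this
  have hkey : (27 : ZMod p) * Q.coeff 7 = 0 := by
    have : r1 = r1 := rfl
    norm_num at r1 r2 r3 r4 r5
    linear_combination r1 - 3 * r2 + 6 * r3 - 9 * r4 + 9 * r5 - hb1
  exact (mul_eq_zero.mp hkey).resolve_left h27

end main

end DpAux



/-- Let `p > 5` be prime with `p ≡ 2 (mod 3)`, `Q` the polynomial of degree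
`≤ p-2` over `𝔽_p` with `Q(t) = (t² + 3t + 3)^(p-2)` for all nonzero `t`, with
coefficients `b_k = Q.coeff k` for `0 ≤ k ≤ p-2`.  With
`b̂_k := ∏_{0 ≤ j ≤ p-2, j ≡ k (mod 2), j ≠ k} b_j`, we have
`D_p^-(3,3) ≡ 4 · (Σ_{i=0}^{(p-3)/2} b̂_{2i}) · (Σ_{i=0}^{(p-3)/2} b̂_{2i+1}) (mod p)`. -/
theorem Dp_minus_three_three_congr (p : ℕ) (hp : p.Prime) (hp5 : 5 < p)
    (h : p % 3 = 2)
    (Q : Polynomial (ZMod p)) (hdeg : Q.degree ≤ (p - 2 : ℕ))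
    (hQ : ∀ t : ZMod p, t ≠ 0 → Q.eval t = (t ^ 2 + 3 * t + 3) ^ (p - 2)) :
    ((Matrix.det (Matrix.of fun i j : Fin (p - 3) =>
        (((i : ℤ) + 2) ^ 2 + 3 * ((i : ℤ) + 2) * ((j : ℤ) + 2)
          + 3 * ((j : ℤ) + 2) ^ 2) ^ (p - 2)) : ℤ) : ZMod p)
      = 4 * (∑ i ∈ Finset.range ((p - 3) / 2 + 1),
              ∏ j ∈ (Finset.range (p - 1)).filter
                (fun j => j % 2 = (2 * i) % 2 ∧ j ≠ 2 * i), Q.coeff j)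
          * (∑ i ∈ Finset.range ((p - 3) / 2 + 1),
              ∏ j ∈ (Finset.range (p - 1)).filter
                (fun j => j % 2 = (2 * i + 1) % 2 ∧ j ≠ 2 * i + 1), Q.coeff j) := by
  haveI : Fact p.Prime := ⟨hp⟩
  haveI : Fact (1 < p) := ⟨by omega⟩
  classical
  have hp11 : 11 ≤ p := DpAux.p_ge_11 hp hp5 h
  have hb1 : Q.coeff 1 = 0 := DpAux.coeff_one_eq_zero hp hp5 h Q hdeg hQ
  have hb7 : Q.coeff 7 = 0 := DpAux.coeff_seven_eq_zero hp hp5 h Q hdeg hQ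
  -- RHS is zero
  have hS1 : (∑ i ∈ Finset.range ((p - 3) / 2 + 1),
      ∏ j ∈ (Finset.range (p - 1)).filter
        (fun j => j % 2 = (2 * i + 1) % 2 ∧ j ≠ 2 * i + 1), Q.coeff j) = 0 := by
    refine Finset.sum_eq_zero fun i _ => ?_
    by_cases hi0 : i = 0
    · subst hi0
      exact Finset.prod_eq_zero (Finset.mem_filter.mpr
        ⟨Finset.mem_range.mpr (by omega), by omega, by omega⟩) hb7
    · exact Finset.prod_eq_zero (Finset.mem_filter.mpr
        ⟨Finset.mem_range.mpr (by omega), by omega, by omega⟩) hb1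
  rw [hS1, mul_zero]
  -- LHS is zero
  set n := p - 3 with hn
  set f : Fin n → ZMod p := fun i => ((i : ℕ) : ZMod p) + 2 with hf
  set N : Matrix (Fin n) (Fin n) (ZMod p) := Matrix.of (fun i j =>
      ((f i) ^ 2 + 3 * f i * f j + 3 * (f j) ^ 2) ^ (p - 2)) with hN
  have hcast : ((Matrix.det (Matrix.of fun i j : Fin (p - 3) =>
      (((i : ℤ) + 2) ^ 2 + 3 * ((i : ℤ) + 2) * ((j : ℤ) + 2)
        + 3 * ((j : ℤ) + 2) ^ 2) ^ (p - 2)) : ℤ) : ZMod p) = N.det := by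
    rw [show ((Matrix.det (Matrix.of fun i j : Fin (p - 3) =>
        (((i : ℤ) + 2) ^ 2 + 3 * ((i : ℤ) + 2) * ((j : ℤ) + 2)
          + 3 * ((j : ℤ) + 2) ^ 2) ^ (p - 2)) : ℤ) : ZMod p)
      = (Int.castRingHom (ZMod p)) (Matrix.det (Matrix.of fun i j : Fin (p - 3) =>
        (((i : ℤ) + 2) ^ 2 + 3 * ((i : ℤ) + 2) * ((j : ℤ) + 2)
          + 3 * ((j : ℤ) + 2) ^ 2) ^ (p - 2))) from rfl, RingHom.map_det]
    congr 1
    ext i j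
    simp only [RingHom.mapMatrix_apply, Matrix.map_apply, Matrix.of_apply, hN, hf]
    rw [eq_intCast (Int.castRingHom (ZMod p))]
    push_cast
    ring
  rw [hcast]
  -- exhibit kernel vector
  have hn0 : 0 < n := by omega
  have hfval : ∀ i : Fin n, (f i).val = (i : ℕ) + 2 := by
    intro i
    have : f i = (((i : ℕ) + 2 : ℕ) : ZMod p) := by push_cast [hf]; ring
    rw [this, ZMod.val_natCast, Nat.mod_eq_of_lt (by omega : (i : ℕ) + 2 < p)]
  have hm1 : ((p - 1 : ℕ) : ZMod p) = -1 := by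
    have : ((p - 1 : ℕ) : ZMod p) = (p : ℕ) - 1 := by
      push_cast [Nat.cast_sub (by omega : 1 ≤ p)]; ring
    rw [this, ZMod.natCast_self, zero_sub]
  set v : Fin n → ZMod p := fun i => (f i) ^ (p - 2) - (f i) ^ (p - 8) with hv
  have h63 : (63 : ZMod p) ≠ 0 := by
    have : ((63 : ℕ) : ZMod p) ≠ 0 := by
      rw [Ne, ZMod.natCast_eq_zero_iff]
      intro hdvd
      have := Nat.le_of_dvd (by norm_num) hdvd
      interval_cases p <;> omega
    simpa using this
  have h2 : (2 : ZMod p) ≠ 0 := by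
    have : ((2 : ℕ) : ZMod p) ≠ 0 := by
      rw [Ne, ZMod.natCast_eq_zero_iff]
      intro hdvd
      have := Nat.le_of_dvd (by norm_num) hdvd
      omega
    simpa using this
  have hvne : v ≠ 0 := by
    intro hv0
    have hf0 : f ⟨0, hn0⟩ = 2 := by simp [hf]
    have h0 := congrFun hv0 ⟨0, hn0⟩
    simp only [hv, Pi.zero_apply] at h0
    rw [hf0] at h0
    have hkey : (2 : ZMod p) ^ (p - 8) * 63 = 0 := by
      rw [show p - 2 = (p - 8) + 6 by omega, pow_add] at h0
      linear_combination h0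
    rcases mul_eq_zero.mp hkey with hc | hc
    · exact pow_ne_zero _ h2 hc
    · exact h63 hc
  rw [← Matrix.det_transpose]
  rw [← Matrix.exists_mulVec_eq_zero_iff]
  refine ⟨v, hvne, ?_⟩
  funext j
  show ∑ i : Fin n, N.transpose j i * v i = 0
  have hNt : ∀ i, N.transpose j i * v i
      = ((f i) ^ 2 + 3 * (f i) * (f j) + 3 * (f j) ^ 2) ^ (p - 2)
        * ((f i) ^ (p - 2) - (f i) ^ (p - 8)) := fun i => rfl
  set J : ZMod p := f j with hJ
  set G : ZMod p → ZMod p :=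
    fun x => (x ^ 2 + 3 * x * J + 3 * J ^ 2) ^ (p - 2) * (x ^ (p - 2) - x ^ (p - 8))
    with hG
  have hstep : ∑ i : Fin n, N.transpose j i * v i
      = ∑ x ∈ Finset.univ.filter (fun x : ZMod p => x ≠ 0 ∧ x ≠ 1 ∧ x ≠ -1), G x := by
    rw [Finset.sum_congr rfl (fun i _ => hNt i)]
    refine Finset.sum_nbij' f
      (fun x => (⟨(x.val - 2) % n, Nat.mod_lt _ hn0⟩ : Fin n)) ?_ ?_ ?_ ?_ ?_
    · intro i _
      rw [Finset.mem_filter]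
      refine ⟨Finset.mem_univ _, ?_, ?_, ?_⟩
      · intro h0
        have := congrArg ZMod.val h0
        rw [hfval, ZMod.val_zero] at this
        omega
      · intro h0
        have := congrArg ZMod.val h0
        rw [hfval, ZMod.val_one] at this
        omega
      · intro h0
        rw [← hm1] at h0
        have := congrArg ZMod.val h0
        rw [hfval, ZMod.val_natCast, Nat.mod_eq_of_lt (by omega)] at this
        have hi := i.isLt
        omega
    · intro x _; exact Finset.mem_univ _
    · intro i _
      apply Fin.ext
      show ((f i).val - 2) % n = (i : ℕ)
      rw [hfval]
      simpa using Nat.mod_eq_of_lt i.isLt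
    · intro x hx
      rw [Finset.mem_filter] at hx
      obtain ⟨-, hx0, hx1, hxm1⟩ := hx
      have hval0 : x.val ≠ 0 := fun h0 => hx0 ((ZMod.val_eq_zero x).mp h0)
      have hvlt : x.val < p := ZMod.val_lt x
      have hval1 : x.val ≠ 1 := by
        intro h1
        apply hx1
        rw [← ZMod.natCast_zmod_val x, h1, Nat.cast_one]
      have hvalm1 : x.val ≠ p - 1 := by
        intro h1
        apply hxm1
        rw [← ZMod.natCast_zmod_val x, h1, hm1]
      have hmod : (x.val - 2) % n = x.val - 2 := Nat.mod_eq_of_lt (by omega)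
      show f ⟨(x.val - 2) % n, _⟩ = x
      have : f ⟨(x.val - 2) % n, Nat.mod_lt _ hn0⟩
          = (((x.val - 2) % n + 2 : ℕ) : ZMod p) := by push_cast [hf]; ring
      rw [this, hmod, show x.val - 2 + 2 = x.val by omega, ZMod.natCast_zmod_val]
    · intro i _; rfl
  rw [hstep]
  have hJne : J ≠ 0 := by
    intro h0
    have := congrArg ZMod.val h0
    rw [hJ, hfval, ZMod.val_zero] at this
    omega
  set T := Finset.univ.filter (fun x : ZMod p => x ≠ 0) with hT
  have hsub : ∑ x ∈ Finset.univ.filter (fun x : ZMod p => x ≠ 0 ∧ x ≠ 1 ∧ x ≠ -1), G x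
      = ∑ x ∈ T, G x := by
    refine Finset.sum_subset ?_ ?_
    · intro x hx
      rw [Finset.mem_filter] at hx ⊢
      exact ⟨hx.1, hx.2.1⟩
    · intro x hxT hxT'
      rw [Finset.mem_filter] at hxT hxT'
      push_neg at hxT'
      rcases eq_or_ne x 1 with h1 | h1
      · subst h1
        simp [hG]
      · have hm : x = -1 := hxT' hxT.1 hxT.2 h1
        subst hm
        simp only [hG]
        have : ((-1 : ZMod p)) ^ (p - 2) - ((-1 : ZMod p)) ^ (p - 8) = 0 := by
          rw [show p - 2 = (p - 8) + 6 by omega, pow_add]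
          norm_num
        rw [this, mul_zero]
  rw [hsub]
  have hbij : ∑ x ∈ T, G x = ∑ y ∈ T, G (J * y) := by
    refine Finset.sum_nbij' (fun x => J⁻¹ * x) (fun y => J * y) ?_ ?_ ?_ ?_ ?_
    · intro x hx
      rw [Finset.mem_filter] at hx ⊢
      exact ⟨Finset.mem_univ _, mul_ne_zero (inv_ne_zero hJne) hx.2⟩
    · intro y hy
      rw [Finset.mem_filter] at hy ⊢
      exact ⟨Finset.mem_univ _, mul_ne_zero hJne hy.2⟩
    · intro x _
      show J * (J⁻¹ * x) = x
      rw [← mul_assoc, mul_inv_cancel₀ hJne, one_mul]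
    · intro y _
      show J⁻¹ * (J * y) = y
      rw [← mul_assoc, inv_mul_cancel₀ hJne, one_mul]
    · intro x _
      show G x = G (J * (J⁻¹ * x))
      rw [← mul_assoc, mul_inv_cancel₀ hJne, one_mul]
  rw [hbij]
  have hterm : ∀ y ∈ T, G (J * y)
      = (J ^ 2) ^ (p - 2) * J ^ (p - 2) * (y ^ (p - 2) * Q.eval y)
        - (J ^ 2) ^ (p - 2) * J ^ (p - 8) * (y ^ (p - 8) * Q.eval y) := by
    intro y hy
    rw [Finset.mem_filter] at hy
    simp only [hG]
    have hfac : (J * y) ^ 2 + 3 * (J * y) * J + 3 * J ^ 2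
        = J ^ 2 * (y ^ 2 + 3 * y + 3) := by ring
    rw [hfac, mul_pow, mul_pow J y (p - 2), mul_pow J y (p - 8), ← hQ y hy.2]
    ring
  rw [Finset.sum_congr rfl hterm, Finset.sum_sub_distrib, ← Finset.mul_sum, ← Finset.mul_sum]
  have hc1 : ∑ y ∈ T, y ^ (p - 2) * Q.eval y = 0 := by
    have := DpAux.coeff_eq_sum Q hdeg (by omega) (k := 1) (by omega)
    rw [show p - 1 - 1 = p - 2 by omega] at this
    rw [hT, this, hb1, neg_zero]
  have hc7 : ∑ y ∈ T, y ^ (p - 8) * Q.eval y = 0 := by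
    have := DpAux.coeff_eq_sum Q hdeg (by omega) (k := 7) (by omega)
    rw [show p - 1 - 7 = p - 8 by omega] at this
    rw [hT, this, hb7, neg_zero]
  rw [hc1, hc7, mul_zero, mul_zero, sub_zero]
end
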